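/- Quantifier elimination for the ∃*∀*-fragment: the formula φ ≡ ∃π₁…∃π_n ∀π'₁…∀π'_m. ψ is satisfiable if and only if the ∃*-formula φ' ≡ ∃π₁…∃π_n. ⋀_{j₁=1}^{n} ⋯ ⋀_{j_m=1}^{n} ψ[π_{j₁}/π'₁]…[π_{j_m}/π'_m] is satisfiable. In particular, if Π ⊨ φ' then the finite trace set T = {Π(π_i) | 1 ≤ i ≤ n} satisfies φ. -/

import Mathlib

/-- A trace: an infinite alternating sequence of labels (sets of atomic propositions)
and atomic programs; `lab j` is the label at step `j`, `act j` the atomic program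
between steps `j` and `j+1`. -/
structure Trace (AP P : Type) where
  lab : ℕ → Set AP
  act : ℕ → P

/-- The suffix of a trace starting after `j` steps. -/
def Trace.drop {AP P : Type} (t : Trace AP P) (j : ℕ) : Trace AP P :=
  ⟨fun m => t.lab (j + m), fun m => t.act (j + m)⟩

/-- The shifted trace assignment. -/
def TAdrop {AP P : Type} {n : ℕ} (Pa : Fin n → Trace AP P) (j : ℕ) : Fin n → Trace AP P :=
  fun l => (Pa l).drop j

mutual
/-- Quantifier-free HyperPDL-Δ formulas over `n` path variables. -/
inductive QF (AP P : Type) (n : ℕ) : Type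
  | atom (a : AP) (l : Fin n) : QF AP P n
  | not (φ : QF AP P n) : QF AP P n
  | and (φ ψ : QF AP P n) : QF AP P n
  | or (φ ψ : QF AP P n) : QF AP P n
  | dia (α : Pg AP P n) (φ : QF AP P n) : QF AP P n
  | box (α : Pg AP P n) (φ : QF AP P n) : QF AP P n
  | delta (α : Pg AP P n) : QF AP P n

/-- Programs of HyperPDL-Δ (with `none` as the wildcard coordinate). -/
inductive Pg (AP P : Type) (n : ℕ) : Type
  | atom (t : Fin n → Option P) : Pg AP P n
  | eps : Pg AP P n
  | sum (a b : Pg AP P n) : Pg AP P n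
  | seq (a b : Pg AP P n) : Pg AP P n
  | star (a : Pg AP P n) : Pg AP P n
  | test (φ : QF AP P n) : Pg AP P n
end

mutual
/-- Satisfaction of a quantifier-free formula by a trace assignment. -/
def QF.Sat {AP P : Type} {n : ℕ} : QF AP P n → (Fin n → Trace AP P) → Prop
  | .atom a l, Pa => a ∈ (Pa l).lab 0
  | .not φ, Pa => ¬ φ.Sat Pa
  | .and φ ψ, Pa => φ.Sat Pa ∧ ψ.Sat Pa
  | .or φ ψ, Pa => φ.Sat Pa ∨ ψ.Sat Pa
  | .dia α φ, Pa => ∃ j, α.Rel Pa 0 j ∧ φ.Sat (TAdrop Pa j)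
  | .box α φ, Pa => ∀ j, α.Rel Pa 0 j → φ.Sat (TAdrop Pa j)
  | .delta α, Pa => ∃ k : ℕ → ℕ, k 0 = 0 ∧ (∀ i, k i ≤ k (i + 1)) ∧
      ∀ i, α.Rel Pa (k i) (k (i + 1))

/-- The relation `(Π, i, k) ∈ R(α)` (indices count steps). -/
def Pg.Rel {AP P : Type} {n : ℕ} : Pg AP P n → (Fin n → Trace AP P) → ℕ → ℕ → Prop
  | .atom t, Pa, i, k => k = i + 1 ∧ ∀ l, t l = none ∨ t l = some ((Pa l).act i)
  | .eps, _, i, k => i = k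
  | .sum a b, Pa, i, k => a.Rel Pa i k ∨ b.Rel Pa i k
  | .seq a b, Pa, i, k => ∃ j, i ≤ j ∧ j ≤ k ∧ a.Rel Pa i j ∧ b.Rel Pa j k
  | .star a, Pa, i, k => ∃ (m : ℕ) (js : Fin (m + 1) → ℕ), js 0 = i ∧ js (Fin.last m) = k ∧
      ∀ l : Fin m, js l.castSucc ≤ js l.succ ∧ a.Rel Pa (js l.castSucc) (js l.succ)
  | .test φ, Pa, i, k => i = k ∧ φ.Sat (TAdrop Pa i)
end

/-- An unsatisfiable formula. -/
def fls (AP P : Type) [Inhabited AP] (n : ℕ) (hn : 0 < n) : QF AP P n :=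
  .and (.atom default ⟨0, hn⟩) (.not (.atom default ⟨0, hn⟩))

/-- The renaming `Fin (n + m) → Fin n` substituting the universally quantified variable
`π'_i` by the existentially quantified variable `π_{j i}`. -/
def ren {n m : ℕ} (j : Fin m → Fin n) (l : Fin (n + m)) : Fin n :=
  if h : (l : ℕ) < n then ⟨l, h⟩ else j ⟨(l : ℕ) - n, by omega⟩

open Classical in
/-- Substitution on program tuples: coordinates merged by the renaming are combined,
wildcards absorbing any symbol; if two distinct concrete atomic programs are merged, the
result is the unsatisfiable program `false? · (·)`. -/
noncomputable def substTuple {P : Type} (AP : Type) [Inhabited AP] {n m : ℕ} (hn : 0 < n)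
    (j : Fin m → Fin n) (t : Fin (n + m) → Option P) : Pg AP P n :=
  if ∃ l l' : Fin (n + m), ren j l = ren j l' ∧
      ∃ σ σ' : P, t l = some σ ∧ t l' = some σ' ∧ σ ≠ σ' then
    .seq (.test (fls AP P n hn)) (.atom fun _ => none)
  else
    .atom (fun r => if h : ∃ σ : P, ∃ l, ren j l = r ∧ t l = some σ then some h.choose else none)

mutual
/-- Substitution `ψ[π_{j₁}/π'₁]…[π_{j_m}/π'_m]` on quantifier-free formulas. -/
noncomputable def QF.subst {AP P : Type} [Inhabited AP] {n m : ℕ} (hn : 0 < n)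
    (j : Fin m → Fin n) : QF AP P (n + m) → QF AP P n
  | .atom a l => .atom a (ren j l)
  | .not φ => .not (φ.subst hn j)
  | .and φ ψ => .and (φ.subst hn j) (ψ.subst hn j)
  | .or φ ψ => .or (φ.subst hn j) (ψ.subst hn j)
  | .dia α φ => .dia (α.subst hn j) (φ.subst hn j)
  | .box α φ => .box (α.subst hn j) (φ.subst hn j)
  | .delta α => .delta (α.subst hn j)

/-- Substitution on programs. -/
noncomputable def Pg.subst {AP P : Type} [Inhabited AP] {n m : ℕ} (hn : 0 < n)
    (j : Fin m → Fin n) : Pg AP P (n + m) → Pg AP P n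
  | .atom t => substTuple AP hn j t
  | .eps => .eps
  | .sum a b => .sum (a.subst hn j) (b.subst hn j)
  | .seq a b => .seq (a.subst hn j) (b.subst hn j)
  | .star a => .star (a.subst hn j)
  | .test φ => .test (φ.subst hn j)
end


/-! The universal quantifiers range over a trace set containing the witnesses, so they may be
instantiated by the witnesses themselves; conversely on `T = {Π(π_i)}` every instantiation of
the universal variables is one of the `n ^ m` substitution instances. Both directions rest on the
substitution lemma `(ψ.subst hn j).Sat te ↔ ψ.Sat (te ∘ ren j)`; the only delicate case is a
program tuple whose merged coordinates carry distinct atomic programs, which no assignment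
factoring through `ren j` can follow. -/

theorem Pg.rel_atom_iff {AP P : Type} {n : ℕ} (t : Fin n → Option P) (Pa : Fin n → Trace AP P)
    (i k : ℕ) :
    (Pg.atom t).Rel Pa i k ↔ k = i + 1 ∧ ∀ l σ, t l = some σ → σ = (Pa l).act i := by
  refine and_congr_right fun _ => forall_congr' fun l => ?_
  cases t l <;> simp [eq_comm]

theorem QF.not_sat_fls {AP P : Type} [Inhabited AP] {n : ℕ} (hn : 0 < n)
    (Pa : Fin n → Trace AP P) : ¬ (fls AP P n hn).Sat Pa :=
  fun h => h.2 h.1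

section Substitution

variable {AP P : Type} [Inhabited AP] {n m : ℕ} (hn : 0 < n) (j : Fin m → Fin n)

def TupleClash (t : Fin (n + m) → Option P) : Prop :=
  ∃ l l' : Fin (n + m), ren j l = ren j l' ∧ ∃ σ σ' : P, t l = some σ ∧ t l' = some σ' ∧ σ ≠ σ'

open Classical in
noncomputable def mergeTuple (t : Fin (n + m) → Option P) : Fin n → Option P :=
  fun r => if h : ∃ σ : P, ∃ l, ren j l = r ∧ t l = some σ then some h.choose else none

theorem substTuple_of_clash {t : Fin (n + m) → Option P} (h : TupleClash j t) :
    substTuple AP hn j t = .seq (.test (fls AP P n hn)) (.atom fun _ => none) :=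
  if_pos h

theorem substTuple_of_not_clash {t : Fin (n + m) → Option P} (h : ¬ TupleClash j t) :
    substTuple AP hn j t = .atom (mergeTuple j t) :=
  if_neg h

theorem mergeTuple_eq_some_iff {t : Fin (n + m) → Option P} (h : ¬ TupleClash j t)
    (r : Fin n) (σ : P) : mergeTuple j t r = some σ ↔ ∃ l, ren j l = r ∧ t l = some σ := by
  unfold mergeTuple
  split_ifs with hex
  · obtain ⟨l, hlr, hl⟩ := hex.choose_spec
    refine ⟨fun hσ => ⟨l, hlr, hl.trans hσ⟩, fun ⟨l', hl'r, hl'⟩ => ?_⟩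
    by_contra hne
    exact h ⟨l, l', hlr.trans hl'r.symm, _, σ, hl, hl', fun heq => hne (congrArg some heq)⟩
  · exact ⟨nofun, fun hσ => hex ⟨σ, hσ⟩⟩

variable (t : Fin (n + m) → Option P) (te : Fin n → Trace AP P) (i k : ℕ)

theorem substTuple_rel_iff_of_clash (h : TupleClash j t) :
    (substTuple AP hn j t).Rel te i k ↔ (Pg.atom t).Rel (te ∘ ren j) i k := by
  obtain ⟨l, l', hren, σ, σ', hl, hl', hne⟩ := h
  rw [substTuple_of_clash hn j ⟨l, l', hren, σ, σ', hl, hl', hne⟩, Pg.rel_atom_iff]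
  refine ⟨fun ⟨_, _, _, ⟨_, hfls⟩, _⟩ => absurd hfls (QF.not_sat_fls hn _), fun ⟨_, hact⟩ => ?_⟩
  refine absurd ?_ hne
  rw [hact l σ hl, hact l' σ' hl', Function.comp_apply, Function.comp_apply, hren]

theorem substTuple_rel_iff_of_not_clash (h : ¬ TupleClash j t) :
    (substTuple AP hn j t).Rel te i k ↔ (Pg.atom t).Rel (te ∘ ren j) i k := by
  simp only [substTuple_of_not_clash hn j h, Pg.rel_atom_iff, mergeTuple_eq_some_iff j h,
    forall_exists_index, and_imp, Function.comp_apply]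
  exact and_congr_right fun _ =>
    ⟨fun H l σ hl => H _ σ l rfl hl, fun H _ σ l hlr hl => hlr ▸ H l σ hl⟩

theorem substTuple_rel_iff :
    (substTuple AP hn j t).Rel te i k ↔ (Pg.atom t).Rel (te ∘ ren j) i k := by
  by_cases h : TupleClash j t
  · exact substTuple_rel_iff_of_clash hn j t te i k h
  · exact substTuple_rel_iff_of_not_clash hn j t te i k h

end Substitution

mutual
theorem QF.sat_subst_iff {AP P : Type} [Inhabited AP] {n m : ℕ} (hn : 0 < n)
    (j : Fin m → Fin n) : ∀ (φ : QF AP P (n + m)) (te : Fin n → Trace AP P),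
    (φ.subst hn j).Sat te ↔ φ.Sat (te ∘ ren j)
  | .atom _ _, _ => Iff.rfl
  | .not φ, te => not_congr (φ.sat_subst_iff hn j te)
  | .and φ ψ, te => and_congr (φ.sat_subst_iff hn j te) (ψ.sat_subst_iff hn j te)
  | .or φ ψ, te => or_congr (φ.sat_subst_iff hn j te) (ψ.sat_subst_iff hn j te)
  | .dia α φ, te => exists_congr fun d =>
      and_congr (α.rel_subst_iff hn j te 0 d) (φ.sat_subst_iff hn j (TAdrop te d))
  | .box α φ, te => forall_congr' fun d =>
      imp_congr (α.rel_subst_iff hn j te 0 d) (φ.sat_subst_iff hn j (TAdrop te d))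
  | .delta α, te => exists_congr fun k => and_congr_right fun _ => and_congr_right fun _ =>
      forall_congr' fun i => α.rel_subst_iff hn j te (k i) (k (i + 1))

theorem Pg.rel_subst_iff {AP P : Type} [Inhabited AP] {n m : ℕ} (hn : 0 < n)
    (j : Fin m → Fin n) : ∀ (α : Pg AP P (n + m)) (te : Fin n → Trace AP P) (i k : ℕ),
    (α.subst hn j).Rel te i k ↔ α.Rel (te ∘ ren j) i k
  | .atom t, te, i, k => substTuple_rel_iff hn j t te i k
  | .eps, _, _, _ => Iff.rfl
  | .sum a b, te, i, k => or_congr (a.rel_subst_iff hn j te i k) (b.rel_subst_iff hn j te i k)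
  | .seq a b, te, i, k => exists_congr fun d => and_congr_right fun _ => and_congr_right fun _ =>
      and_congr (a.rel_subst_iff hn j te i d) (b.rel_subst_iff hn j te d k)
  | .star a, te, _, _ => exists_congr fun _ => exists_congr fun js =>
      and_congr_right fun _ => and_congr_right fun _ => forall_congr' fun l =>
        and_congr_right fun _ => a.rel_subst_iff hn j te (js l.castSucc) (js l.succ)
  | .test φ, te, i, _ => and_congr_right fun _ => φ.sat_subst_iff hn j (TAdrop te i)
end

theorem append_comp_eq_comp_ren {α : Type*} {n m : ℕ} (f : Fin n → α) (j : Fin m → Fin n) :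
    Fin.append f (f ∘ j) = f ∘ ren j := by
  funext l
  refine Fin.addCases (fun i => ?_) (fun i => ?_) l <;> simp [ren]

section Fragment

variable {AP P : Type} [Inhabited AP] {n m : ℕ} (hn : 0 < n) {ψ : QF AP P (n + m)}
  {te : Fin n → Trace AP P}

theorem QF.sat_subst_of_forall_sat_append {T : Set (Trace AP P)} (hte : ∀ i, te i ∈ T)
    (hψ : ∀ tu : Fin m → Trace AP P, (∀ i, tu i ∈ T) → ψ.Sat (Fin.append te tu))
    (j : Fin m → Fin n) : (ψ.subst hn j).Sat te := by
  rw [QF.sat_subst_iff, ← append_comp_eq_comp_ren]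
  exact hψ (te ∘ j) fun i => hte (j i)

theorem QF.sat_append_of_forall_sat_subst (hψ : ∀ j : Fin m → Fin n, (ψ.subst hn j).Sat te)
    {tu : Fin m → Trace AP P} (htu : ∀ i, tu i ∈ Set.range te) : ψ.Sat (Fin.append te tu) := by
  choose j hj using htu
  obtain rfl : tu = te ∘ j := funext fun i => (hj i).symm
  rw [append_comp_eq_comp_ren, ← QF.sat_subst_iff]
  exact hψ j

end Fragment

/-- **Quantifier elimination for the `∃*∀*`-fragment**:
`∃π₁…π_n ∀π'₁…π'_m. ψ` is satisfiable iff the `∃*`-formula obtained by conjoining all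
substitution instances `ψ[π_{j₁}/π'₁]…[π_{j_m}/π'_m]` is satisfiable; moreover, any tuple
of traces satisfying every substitution instance induces the trace set
`T = {Π(π_i) | 1 ≤ i ≤ n}` which models the original formula. -/
theorem exists_forall_fragment_sat {AP P : Type} [Inhabited AP] {n m : ℕ} (hn : 0 < n)
    (ψ : QF AP P (n + m)) :
    ((∃ T : Set (Trace AP P), T.Nonempty ∧ ∃ te : Fin n → Trace AP P,
        (∀ i, te i ∈ T) ∧ ∀ tu : Fin m → Trace AP P, (∀ i, tu i ∈ T) →
          ψ.Sat (Fin.append te tu))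
      ↔ (∃ T : Set (Trace AP P), T.Nonempty ∧ ∃ te : Fin n → Trace AP P,
        (∀ i, te i ∈ T) ∧ ∀ j : Fin m → Fin n, (ψ.subst hn j).Sat te))
    ∧ ∀ te : Fin n → Trace AP P, (∀ j : Fin m → Fin n, (ψ.subst hn j).Sat te) →
        ∀ tu : Fin m → Trace AP P, (∀ i, tu i ∈ Set.range te) →
          ψ.Sat (Fin.append te tu) := by
  refine ⟨⟨?_, ?_⟩, fun te hψ tu => QF.sat_append_of_forall_sat_subst hn hψ⟩
  · rintro ⟨T, hT, te, hte, hψ⟩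
    exact ⟨T, hT, te, hte, QF.sat_subst_of_forall_sat_append hn hte hψ⟩
  · rintro ⟨-, -, te, -, hψ⟩
    exact ⟨Set.range te, Set.range_nonempty_iff_nonempty.mpr ⟨⟨0, hn⟩⟩, te, Set.mem_range_self,
      fun tu => QF.sat_append_of_forall_sat_subst hn hψ⟩
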